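/- arXiv:1403.5619 — 4 statements merged into one kernel-verified Lean document; each statement's English description precedes it below -/
import Mathlib

section
/- The harmonic Koebe function K = h + conj∘g, where h(z) = (z − z²/2 + z³/6)/(1−z)³ and g(z) = (z²/2 + z³/6)/(1−z)³, belongs to S⁰_H(S); that is, K is sense-preserving (|g'(z)| < |h'(z)| on 𝔻), K is injective on 𝔻, h(0) = g(0) = 0, h'(0) = 1, g'(0) = 0, and h − g (which equals the Koebe function z/(1−z)²) is injective on 𝔻. -/
/-!
With `s = (1 + z) / (1 - z)`, which maps `𝔻` into the right half-plane, one has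
`h + g = (s ^ 3 - 1) / 6` and `h - g = (s ^ 2 - 1) / 4`. Since `K = Re (h + g) + i Im (h - g)`,
injectivity of `K` reduces to injectivity of `s ↦ (Re s³, Im s²)` on `Re s > 0`: writing
`s = p + i q`, the value `Im s² = 2 p q` fixes `m = p q`, and then `Re s³ = p³ - 3 m² / p` is
strictly increasing in `p > 0`. The dilatation `g' / h'` is `z`, so `K` is sense-preserving.
-/

open Metric Complex ComplexConjugate

lemma HasDerivAt.div_one_sub_pow_three {p : ℂ → ℂ} {p' z : ℂ} (hp : HasDerivAt p p' z)
    (hz : 1 - z ≠ 0) :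
    HasDerivAt (fun w => p w / (1 - w) ^ 3) ((p' * (1 - z) + 3 * p z) / (1 - z) ^ 4) z := by
  have hden : HasDerivAt (fun w : ℂ => (1 - w) ^ 3) (3 * (1 - z) ^ 2 * (-1)) z := by
    simpa using ((hasDerivAt_id z).const_sub 1).fun_pow 3
  refine (hp.div hden (pow_ne_zero 3 hz)).congr_deriv ?_
  field_simp
  ring

namespace HarmonicKoebe

variable {z : ℂ}

lemma sub_ne_zero_of_norm_lt_one (hz : ‖z‖ < 1) : 1 - z ≠ 0 :=
  sub_ne_zero.mpr fun h => by simp [← h] at hz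

lemma add_ne_zero_of_norm_lt_one (hz : ‖z‖ < 1) : 1 + z ≠ 0 := by
  simpa using sub_ne_zero_of_norm_lt_one (z := -z) (by simpa using hz)

noncomputable def cayley (z : ℂ) : ℂ := (1 + z) / (1 - z)

lemma re_cayley_pos (hz : ‖z‖ < 1) : 0 < (cayley z).re := by
  have hnorm : z.re ^ 2 + z.im ^ 2 < 1 := by
    nlinarith [Complex.sq_norm z, Complex.normSq_apply z, norm_nonneg z]
  rw [cayley, div_re]
  have hD : 0 < normSq (1 - z) := normSq_pos.mpr (sub_ne_zero_of_norm_lt_one hz)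
  have hre : (1 + z).re * (1 - z).re + (1 + z).im * (1 - z).im = 1 - z.re ^ 2 - z.im ^ 2 := by
    simp only [add_re, sub_re, one_re, add_im, sub_im, one_im]
    ring
  rw [← add_div, hre]
  exact div_pos (by linarith) hD

lemma cayley_injOn : Set.InjOn cayley {1}ᶜ := by
  intro a ha b hb hab
  have ha' : 1 - a ≠ 0 := sub_ne_zero.mpr (Ne.symm ha)
  have hb' : 1 - b ≠ 0 := sub_ne_zero.mpr (Ne.symm hb)
  have := (div_eq_div_iff ha' hb').mp hab
  linear_combination this / 2

lemma injOn_re_cube_im_sq :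
    Set.InjOn (fun s : ℂ => ((s ^ 3).re, (s ^ 2).im)) {s | 0 < s.re} := by
  rintro ⟨p₁, q₁⟩ (hp₁ : 0 < p₁) ⟨p₂, q₂⟩ (hp₂ : 0 < p₂) hs
  simp only [Prod.mk.injEq, pow_succ, pow_zero, one_mul, mul_re, mul_im] at hs
  obtain ⟨hcube, hsq⟩ := hs
  have hm : p₁ * q₁ = p₂ * q₂ := by linarith
  have hfac : (p₁ - p₂) * (p₁ * p₂ * (p₁ ^ 2 + p₁ * p₂ + p₂ ^ 2) + 3 * (p₁ * q₁) ^ 2) = 0 := by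
    linear_combination p₁ * p₂ * hcube + 3 * p₁ * (p₁ * q₁ + p₂ * q₂) * hm
  have hp : p₁ = p₂ := by
    refine sub_eq_zero.mp ((mul_eq_zero.mp hfac).resolve_right ?_)
    positivity
  subst hp
  simp [mul_left_cancel₀ hp₁.ne' hm]

lemma sq_injOn_re_pos : Set.InjOn (fun s : ℂ => s ^ 2) {s | 0 < s.re} := by
  intro a (ha : 0 < a.re) b (hb : 0 < b.re) hab
  refine (sq_eq_sq_iff_eq_or_eq_neg.mp hab).resolve_right fun h => ?_
  have := congrArg re h
  rw [neg_re] at this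
  linarith

noncomputable def h (z : ℂ) : ℂ := (z - z ^ 2 / 2 + z ^ 3 / 6) / (1 - z) ^ 3

noncomputable def g (z : ℂ) : ℂ := (z ^ 2 / 2 + z ^ 3 / 6) / (1 - z) ^ 3

lemma cayley_pow_three (hz : 1 - z ≠ 0) : cayley z ^ 3 = 1 + 6 * (h z + g z) := by
  simp only [h, g, cayley]
  field_simp
  ring

lemma h_sub_g (hz : 1 - z ≠ 0) : h z - g z = z / (1 - z) ^ 2 := by
  simp only [h, g]
  field_simp
  ring

lemma cayley_sq (hz : 1 - z ≠ 0) : cayley z ^ 2 = 1 + 4 * (h z - g z) := by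
  rw [h_sub_g hz, cayley]
  field_simp
  ring

lemma hasDerivAt_h (hz : 1 - z ≠ 0) : HasDerivAt h ((1 + z) / (1 - z) ^ 4) z := by
  have hp : HasDerivAt (fun w : ℂ => w - w ^ 2 / 2 + w ^ 3 / 6) (1 - z + z ^ 2 / 2) z := by
    refine (((hasDerivAt_id z).sub ((hasDerivAt_pow 2 z).div_const 2)).add
      ((hasDerivAt_pow 3 z).div_const 6)).congr_deriv ?_
    push_cast
    ring
  exact (hp.div_one_sub_pow_three hz).congr_deriv (by ring)

lemma hasDerivAt_g (hz : 1 - z ≠ 0) :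
    HasDerivAt g (z * ((1 + z) / (1 - z) ^ 4)) z := by
  have hp : HasDerivAt (fun w : ℂ => w ^ 2 / 2 + w ^ 3 / 6) (z + z ^ 2 / 2) z := by
    refine (((hasDerivAt_pow 2 z).div_const 2).add
      ((hasDerivAt_pow 3 z).div_const 6)).congr_deriv ?_
    push_cast
    ring
  exact (hp.div_one_sub_pow_three hz).congr_deriv (by ring)

lemma norm_deriv_g_lt (hz : ‖z‖ < 1) : ‖deriv g z‖ < ‖deriv h z‖ := by
  have h1 := sub_ne_zero_of_norm_lt_one hz
  rw [(hasDerivAt_g h1).deriv, (hasDerivAt_h h1).deriv, norm_mul]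
  have hpos : 0 < ‖(1 + z) / (1 - z) ^ 4‖ :=
    norm_pos_iff.mpr (div_ne_zero (add_ne_zero_of_norm_lt_one hz) (pow_ne_zero 4 h1))
  exact mul_lt_of_lt_one_left hpos hz

lemma injOn_h_add_conj_g :
    Set.InjOn (fun z => h z + conj (g z)) (ball 0 1) := by
  intro a ha b hb hab
  rw [mem_ball_zero_iff] at ha hb
  have ha' := sub_ne_zero_of_norm_lt_one ha
  have hb' := sub_ne_zero_of_norm_lt_one hb
  have hre := congrArg re hab
  have him := congrArg im hab
  simp only [add_re, conj_re] at hre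
  simp only [add_im, conj_im, ← sub_eq_add_neg] at him
  have hcube : (cayley a ^ 3).re = (cayley b ^ 3).re := by
    rw [cayley_pow_three ha', cayley_pow_three hb']
    simp only [add_re, one_re, mul_re, re_ofNat, im_ofNat, zero_mul, sub_zero, hre]
  have hsq : (cayley a ^ 2).im = (cayley b ^ 2).im := by
    rw [cayley_sq ha', cayley_sq hb']
    simp only [add_im, one_im, mul_im, re_ofNat, im_ofNat, zero_mul, add_zero, sub_im, him]
  have hcayley : cayley a = cayley b :=
    injOn_re_cube_im_sq (re_cayley_pos ha) (re_cayley_pos hb) (Prod.ext hcube hsq)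
  exact cayley_injOn (sub_ne_zero.mp ha').symm (sub_ne_zero.mp hb').symm hcayley

lemma injOn_h_sub_g :
    Set.InjOn (fun z => h z - g z) (ball 0 1) := by
  intro a ha b hb hab
  rw [mem_ball_zero_iff] at ha hb
  have ha' := sub_ne_zero_of_norm_lt_one ha
  have hb' := sub_ne_zero_of_norm_lt_one hb
  have hsq : cayley a ^ 2 = cayley b ^ 2 := by
    rw [cayley_sq ha', cayley_sq hb']
    exact congrArg (1 + 4 * ·) hab
  exact cayley_injOn (sub_ne_zero.mp ha').symm (sub_ne_zero.mp hb').symm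
    (sq_injOn_re_pos (re_cayley_pos ha) (re_cayley_pos hb) hsq)

end HarmonicKoebe

/-- The harmonic Koebe function `K = h + conj ∘ g` belongs to `S⁰_H(S)`:
it is sense-preserving, injective on `𝔻`, normalized, and `h - g` (the analytic
Koebe function) is injective on `𝔻`. -/
theorem harmonic_koebe_mem_S0HS :
    let h : ℂ → ℂ := fun z => (z - z ^ 2 / 2 + z ^ 3 / 6) / (1 - z) ^ 3
    let g : ℂ → ℂ := fun z => (z ^ 2 / 2 + z ^ 3 / 6) / (1 - z) ^ 3
    (∀ z ∈ ball (0:ℂ) 1, ‖deriv g z‖ < ‖deriv h z‖) ∧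
    Set.InjOn (fun z => h z + conj (g z)) (ball (0:ℂ) 1) ∧
    h 0 = 0 ∧ g 0 = 0 ∧ deriv h 0 = 1 ∧ deriv g 0 = 0 ∧
    (∀ z ∈ ball (0:ℂ) 1, h z - g z = z / (1 - z) ^ 2) ∧
    Set.InjOn (fun z => h z - g z) (ball (0:ℂ) 1) := by
  intro h g
  have h0 : (1 : ℂ) - 0 ≠ 0 := by norm_num
  refine ⟨fun z hz => HarmonicKoebe.norm_deriv_g_lt (mem_ball_zero_iff.mp hz),
    HarmonicKoebe.injOn_h_add_conj_g, by simp [h], by simp [g], ?_, ?_, fun z hz => ?_,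
    HarmonicKoebe.injOn_h_sub_g⟩
  · exact (HarmonicKoebe.hasDerivAt_h h0).deriv.trans (by norm_num)
  · exact (HarmonicKoebe.hasDerivAt_g h0).deriv.trans (by norm_num)
  · exact HarmonicKoebe.h_sub_g
      (HarmonicKoebe.sub_ne_zero_of_norm_lt_one (mem_ball_zero_iff.mp hz))
end

section
/- Let h(z) = (z − z²/2 + z³/6)/(1−z)³ and g(z) = (z²/2 + z³/6)/(1−z)³ be the analytic and co-analytic parts of the harmonic Koebe function, and for θ ∈ [0, 2π) let φ_θ = h + e^{iθ}g. Then φ_θ is injective on 𝔻 if and only if θ = π. -/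
open Metric Complex

/-!
The substitution `w = (1 - z)⁻¹` maps `𝔻` onto the half-plane `1/2 < re w` and turns
`h + a g` into the cubic `2(1+a)/3 w³ - (1+3a)/2 w² + a w - (1+a)/6`.
For `a = -1` this is `w² - w`, injective on the half-plane because `w₁ + w₂ ≠ 1` there.
Otherwise the cubic identifies `m + d` and `m - d` as soon as `d² = -3m² + O(m)`; for a large
real `m` such a `d` has `|re d| = O(√m)`, so both points lie in the half-plane.
-/

namespace Complex

theorem two_mul_re_sq (d : ℂ) : 2 * d.re ^ 2 = ‖d ^ 2‖ + (d ^ 2).re := by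
  rw [norm_pow, ← normSq_eq_norm_sq, normSq_apply, sq d, mul_re]
  ring

theorem not_injOn_cubic {c₃ : ℂ} (hc₃ : c₃ ≠ 0) (c₂ c₁ c₀ : ℂ) (c : ℝ) :
    ¬ Set.InjOn (fun w => c₃ * w ^ 3 + c₂ * w ^ 2 + c₁ * w + c₀) {w | c < w.re} := by
  set β := -2 * c₂ / c₃
  set γ := -c₁ / c₃
  -- large enough that `‖β‖ m + ‖γ‖` stays below both `(m - c)²` and `3 m²`
  set m : ℝ := 2 * |c| + 4 * ‖β‖ + 4 * ‖γ‖ + 1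
  set E := β * m + γ
  have hE : ‖E‖ ≤ ‖β‖ * m + ‖γ‖ := by
    calc ‖E‖ ≤ ‖β‖ * ‖(m : ℂ)‖ + ‖γ‖ := (norm_add_le _ _).trans (by rw [norm_mul])
      _ = ‖β‖ * m + ‖γ‖ := by rw [norm_real, Real.norm_of_nonneg (by positivity)]
  have hmc : |c| + 1 ≤ m - c := by
    simp only [m]; linarith [le_abs_self c, norm_nonneg β, norm_nonneg γ]
  have hEm : ‖β‖ * m + ‖γ‖ < (m - c) ^ 2 := by
    nlinarith [norm_nonneg β, norm_nonneg γ, abs_nonneg c, le_abs_self c]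
  obtain ⟨d, hd⟩ := IsAlgClosed.exists_pow_nat_eq (-3 * (m : ℂ) ^ 2 + E) two_pos
  have hd_norm : ‖d ^ 2‖ ≤ 3 * m ^ 2 + ‖E‖ := by
    rw [hd]
    refine (norm_add_le _ _).trans ?_
    norm_num [norm_pow]
  have hd_re : (d ^ 2).re ≤ -3 * m ^ 2 + ‖E‖ := by
    rw [hd, add_re]
    norm_num [← ofReal_pow]
    linarith [re_le_norm E]
  have hd0 : d ≠ 0 := by
    rintro rfl
    norm_num at hd_re
    nlinarith [norm_nonneg β, norm_nonneg γ, abs_nonneg c]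
  have hre : |d.re| < m - c := by
    refine abs_lt_of_sq_lt_sq ?_ (by linarith [abs_nonneg c])
    nlinarith [two_mul_re_sq d]
  have hmem : ∀ s : ℂ, |s.re| < m - c → (m + s) ∈ {w : ℂ | c < w.re} := by
    intro s hs
    simp only [Set.mem_ofPred_eq, add_re, ofReal_re]
    linarith [neg_abs_le s.re]
  have hcubic : c₃ * d ^ 2 = -3 * c₃ * m ^ 2 - 2 * c₂ * m - c₁ := by
    rw [hd]; simp only [E, β, γ]; field_simp; ring
  intro hinj
  have heq := hinj (hmem d hre) (hmem (-d) (by rwa [neg_re, abs_neg]))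
    (by linear_combination (2 * d) * hcubic)
  exact hd0 (by linear_combination heq / 2)

theorem injOn_sq_sub_self : Set.InjOn (fun w : ℂ => w ^ 2 - w) {w | 1 / 2 < w.re} := by
  intro w₁ h₁ w₂ h₂ h
  have hsum : w₁ + w₂ - 1 ≠ 0 := by
    intro h0
    have := congrArg re h0
    simp only [sub_re, add_re, one_re, zero_re] at this
    simp only [Set.mem_ofPred_eq] at h₁ h₂
    linarith
  have : (w₁ - w₂) * (w₁ + w₂ - 1) = 0 := by linear_combination h
  exact sub_eq_zero.mp ((mul_eq_zero.mp this).resolve_right hsum)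

theorem norm_one_sub_inv_lt_one_iff (w : ℂ) : ‖1 - w⁻¹‖ < 1 ↔ 1 / 2 < w.re := by
  rcases eq_or_ne w 0 with rfl | hw
  · norm_num
  have hw' : 0 < ‖w‖ := norm_pos_iff.mpr hw
  rw [show 1 - w⁻¹ = (w - 1) / w by field_simp, norm_div, div_lt_one hw',
    ← sq_lt_sq₀ (norm_nonneg _) hw'.le, ← normSq_eq_norm_sq, ← normSq_eq_norm_sq,
    normSq_apply, normSq_apply]
  simp only [sub_re, sub_im, one_re, one_im]
  constructor <;> intro h <;> nlinarith

theorem image_ball_inv_one_sub :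
    (fun z : ℂ => (1 - z)⁻¹) '' ball 0 1 = {w : ℂ | 1 / 2 < w.re} := by
  rw [Set.image_eq_preimage_of_inverse (f := fun z : ℂ => (1 - z)⁻¹) (g := fun w => 1 - w⁻¹)
    (fun z => by simp) (fun w => by simp)]
  ext w
  simp [norm_one_sub_inv_lt_one_iff]

theorem exp_mul_I_eq_neg_one_iff {θ : ℝ} (h₀ : 0 ≤ θ) (h₂ : θ < 2 * Real.pi) :
    exp (θ * I) = -1 ↔ θ = Real.pi := by
  refine ⟨fun h => ?_, fun h => by simp [h, exp_pi_mul_I]⟩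
  have hcos : Real.cos θ = -1 := by
    rw [← exp_ofReal_mul_I_re, h, neg_re, one_re]
  obtain ⟨k, rfl⟩ := Real.cos_eq_neg_one_iff.mp hcos
  have hk : k = 0 := by
    have := Real.pi_pos
    have h₁ : (-1 : ℝ) < k := by nlinarith
    have h₂ : (k : ℝ) < 1 := by nlinarith
    have : -1 < k := by exact_mod_cast h₁
    have : k < 1 := by exact_mod_cast h₂
    omega
  simp [hk]

end Complex

noncomputable def harmonicKoebeShear (a z : ℂ) : ℂ :=
  (z - z ^ 2 / 2 + z ^ 3 / 6) / (1 - z) ^ 3 + a * ((z ^ 2 / 2 + z ^ 3 / 6) / (1 - z) ^ 3)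

noncomputable def harmonicKoebeShearCubic (a w : ℂ) : ℂ :=
  2 * (1 + a) / 3 * w ^ 3 + -(1 + 3 * a) / 2 * w ^ 2 + a * w + -(1 + a) / 6

theorem harmonicKoebeShear_eq_cubic (a : ℂ) {z : ℂ} (hz : z ≠ 1) :
    harmonicKoebeShear a z = harmonicKoebeShearCubic a (1 - z)⁻¹ := by
  have : 1 - z ≠ 0 := sub_ne_zero.mpr hz.symm
  unfold harmonicKoebeShear harmonicKoebeShearCubic
  field_simp
  ring

theorem injOn_harmonicKoebeShear_iff_cubic (a : ℂ) :
    Set.InjOn (harmonicKoebeShear a) (ball 0 1) ↔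
      Set.InjOn (harmonicKoebeShearCubic a) {w | 1 / 2 < w.re} := by
  have hinv : Set.InjOn (fun z : ℂ => (1 - z)⁻¹) (ball 0 1) :=
    (inv_injective.comp (sub_right_injective (b := (1 : ℂ)))).injOn
  rw [← image_ball_inv_one_sub, ← hinv.comp_iff]
  refine Set.EqOn.injOn_iff fun z hz => harmonicKoebeShear_eq_cubic a ?_
  rintro rfl
  simp at hz

theorem injOn_harmonicKoebeShear_iff (a : ℂ) :
    Set.InjOn (harmonicKoebeShear a) (ball 0 1) ↔ a = -1 := by
  rw [injOn_harmonicKoebeShear_iff_cubic]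
  constructor
  · intro hinj
    by_contra ha
    have hc₃ : 2 * (1 + a) / 3 ≠ 0 := by
      refine div_ne_zero (mul_ne_zero two_ne_zero fun h => ha ?_) three_ne_zero
      linear_combination h
    exact not_injOn_cubic hc₃ _ _ _ _ hinj
  · rintro rfl
    convert injOn_sq_sub_self using 2
    simp only [harmonicKoebeShearCubic]
    ring

/-- For the harmonic Koebe function with parts `h`, `g`, the analytic function
`φ_θ = h + e^{iθ} g` is injective on `𝔻` if and only if `θ = π` (for `θ ∈ [0, 2π)`). -/
theorem koebe_shear_injective_iff_pi (θ : ℝ) (hθ0 : 0 ≤ θ) (hθ2 : θ < 2 * Real.pi) :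
    Set.InjOn
      (fun z : ℂ => (z - z ^ 2 / 2 + z ^ 3 / 6) / (1 - z) ^ 3
          + Complex.exp (θ * Complex.I) * ((z ^ 2 / 2 + z ^ 3 / 6) / (1 - z) ^ 3))
      (ball (0:ℂ) 1)
    ↔ θ = Real.pi :=
  (injOn_harmonicKoebeShear_iff _).trans (exp_mul_I_eq_neg_one_iff hθ0 hθ2)
end

section
/- The harmonic function f₄ = h + conj∘g, where h(z) = (1 − (1−z)³)/(3(1−z)³) and g(z) = z³/(3(1−z)³), is sense-preserving and injective on 𝔻. -/
/-!
Both `h` and `g` are rational in `1 - z`: `h' = (1 - z)⁻⁴` and `g' = z² h'`, so `|g'| = |z|² |h'| < |h'|`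
on `𝔻`.

For injectivity, pass to the Cayley variable `ζ = (1 + z) / (1 - z)`, which maps `𝔻` injectively into
the right half-plane; there `24 f₄ + 8 = (ζ + 1)³ + conj ((ζ - 1)³)`. Writing `ζ = p + i y` with
`p > 0`, the imaginary part of this is `12 p y` and the real part `2 (p³ + 3p - 3 p y²)`. For a fixed
value `c = p y` the real part `2 (p³ + 3p - 3c²/p)` is strictly increasing in `p`, so the value
determines `p`, and then `y`.
-/

open Metric Complex ComplexConjugate

theorem hasDerivAt_f4_h {z : ℂ} (hz : z ≠ 1) :
    HasDerivAt (fun z => (1 - (1 - z) ^ 3) / (3 * (1 - z) ^ 3)) ((1 - z) ^ 4)⁻¹ z := by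
  have hz' : 1 - z ≠ 0 := sub_ne_zero.mpr hz.symm
  have hsub : HasDerivAt (fun z : ℂ => 1 - z) (-1) z := (hasDerivAt_id z).const_sub 1
  refine (((hsub.pow 3).const_sub 1).div ((hsub.pow 3).const_mul 3)
    (by simpa using hz')).congr_deriv ?_
  simp only [Pi.pow_apply]
  field_simp
  ring

theorem hasDerivAt_f4_g {z : ℂ} (hz : z ≠ 1) :
    HasDerivAt (fun z => z ^ 3 / (3 * (1 - z) ^ 3)) (z ^ 2 * ((1 - z) ^ 4)⁻¹) z := by
  have hz' : 1 - z ≠ 0 := sub_ne_zero.mpr hz.symm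
  have hsub : HasDerivAt (fun z : ℂ => 1 - z) (-1) z := (hasDerivAt_id z).const_sub 1
  refine ((hasDerivAt_pow 3 z).div ((hsub.pow 3).const_mul 3) (by simpa using hz')).congr_deriv ?_
  simp only [Pi.pow_apply]
  field_simp
  ring

theorem re_one_add_div_one_sub_pos {z : ℂ} (hz : ‖z‖ < 1) : 0 < ((1 + z) / (1 - z)).re := by
  have hz' : 1 - z ≠ 0 := sub_ne_zero.mpr (by rintro rfl; simp at hz)
  have hnormSq : z.re * z.re + z.im * z.im < 1 := by
    rw [← normSq_apply, normSq_eq_norm_sq]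
    nlinarith [norm_nonneg z]
  rw [div_re, ← add_div]
  refine div_pos ?_ (normSq_pos.mpr hz')
  simp only [add_re, sub_re, one_re, add_im, sub_im, one_im]
  nlinarith

theorem injOn_one_add_div_one_sub : Set.InjOn (fun z : ℂ => (1 + z) / (1 - z)) {z | z ≠ 1} := by
  intro a ha b hb hab
  rw [div_eq_div_iff (sub_ne_zero.mpr (Ne.symm ha)) (sub_ne_zero.mpr (Ne.symm hb))] at hab
  linear_combination hab / 2

theorem f4_eq_cube_add_conj_sub_one_cube {z : ℂ} (hz : z ≠ 1) :
    (1 - (1 - z) ^ 3) / (3 * (1 - z) ^ 3) + conj (z ^ 3 / (3 * (1 - z) ^ 3)) =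
      (((1 + z) / (1 - z) + 1) ^ 3 + (conj ((1 + z) / (1 - z)) - 1) ^ 3 - 8) / 24 := by
  have hz' : 1 - z ≠ 0 := sub_ne_zero.mpr hz.symm
  have hz'' : 1 - conj z ≠ 0 := by
    rw [← map_one (starRingEnd ℂ), ← map_sub, map_ne_zero]
    exact hz'
  simp only [map_div₀, map_add, map_sub, map_mul, map_pow, map_one, map_ofNat]
  field_simp
  ring

theorem re_cube_add_conj_sub_one_cube (ζ : ℂ) :
    ((ζ + 1) ^ 3 + (conj ζ - 1) ^ 3).re = 2 * (ζ.re ^ 3 + 3 * ζ.re - 3 * ζ.re * ζ.im ^ 2) := by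
  simp only [pow_succ, pow_zero, one_mul, add_re, add_im, mul_re, mul_im, sub_re, sub_im, one_re,
    one_im, conj_re, conj_im]
  ring

theorem im_cube_add_conj_sub_one_cube (ζ : ℂ) :
    ((ζ + 1) ^ 3 + (conj ζ - 1) ^ 3).im = 12 * (ζ.re * ζ.im) := by
  simp only [pow_succ, pow_zero, one_mul, add_re, add_im, mul_re, mul_im, sub_re, sub_im, one_re,
    one_im, conj_re, conj_im]
  ring

theorem eq_and_eq_of_mul_eq_of_cubic_eq {p q y v : ℝ} (hp : 0 < p) (hq : 0 < q)
    (him : p * y = q * v) (hre : p ^ 3 + 3 * p - 3 * p * y ^ 2 = q ^ 3 + 3 * q - 3 * q * v ^ 2) :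
    p = q ∧ y = v := by
  have key : (p - q) * (p * q * (p ^ 2 + p * q + q ^ 2 + 3) + 3 * (p * y) ^ 2) = 0 := by
    linear_combination (p * q) * hre + 3 * (p * y + q * v) * p * him
  have hpq : p = q := by
    refine sub_eq_zero.mp ((mul_eq_zero.mp key).resolve_right (ne_of_gt ?_))
    positivity
  subst hpq
  exact ⟨rfl, mul_left_cancel₀ hp.ne' him⟩

theorem injOn_cube_add_conj_sub_one_cube :
    Set.InjOn (fun ζ : ℂ => (ζ + 1) ^ 3 + (conj ζ - 1) ^ 3) {ζ | 0 < ζ.re} := by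
  intro ζ hζ ξ hξ h
  have hre := congrArg re h
  have him := congrArg im h
  simp only [re_cube_add_conj_sub_one_cube, im_cube_add_conj_sub_one_cube] at hre him
  obtain ⟨hre, him⟩ := eq_and_eq_of_mul_eq_of_cubic_eq (y := ζ.im) (v := ξ.im) hζ hξ
    (by linarith) (by linarith)
  exact Complex.ext hre him

/-- The harmonic function `f₄ = h + conj ∘ g`, where `h(z) = (1-(1-z)³)/(3(1-z)³)` and
`g(z) = z³/(3(1-z)³)`, is sense-preserving and injective on `𝔻`. -/
theorem f4_sense_preserving_and_injective :
    let h : ℂ → ℂ := fun z => (1 - (1 - z) ^ 3) / (3 * (1 - z) ^ 3)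
    let g : ℂ → ℂ := fun z => z ^ 3 / (3 * (1 - z) ^ 3)
    (∀ z ∈ ball (0:ℂ) 1, ‖deriv g z‖ < ‖deriv h z‖) ∧
    Set.InjOn (fun z => h z + conj (g z)) (ball (0:ℂ) 1) := by
  intro h g
  have ne_one : ∀ z ∈ ball (0 : ℂ) 1, z ≠ 1 := fun z hz => by rintro rfl; simp at hz
  constructor
  · intro z hz
    rw [(hasDerivAt_f4_g (ne_one z hz)).deriv, (hasDerivAt_f4_h (ne_one z hz)).deriv,
      norm_mul, norm_pow]
    have hz1 : ‖z‖ < 1 := mem_ball_zero_iff.mp hz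
    have hh' : 0 < ‖((1 - z) ^ 4)⁻¹‖ :=
      norm_pos_iff.mpr (inv_ne_zero (pow_ne_zero 4 (sub_ne_zero.mpr (ne_one z hz).symm)))
    exact mul_lt_of_lt_one_left hh' (pow_lt_one₀ (norm_nonneg z) hz1 two_ne_zero)
  · intro a ha b hb hab
    simp only [h, g, f4_eq_cube_add_conj_sub_one_cube (ne_one a ha),
      f4_eq_cube_add_conj_sub_one_cube (ne_one b hb)] at hab
    refine injOn_one_add_div_one_sub (ne_one a ha) (ne_one b hb) ?_
    refine injOn_cube_add_conj_sub_one_cube (re_one_add_div_one_sub_pos (mem_ball_zero_iff.mp ha))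
      (re_one_add_div_one_sub_pos (mem_ball_zero_iff.mp hb)) ?_
    simpa using hab
end

section
/- Let a ∈ ℝ with a ≥ 1 + √2, let λ ∈ ℂ with |λ| = 1, and define φ(z) = a·log(a/(a−z)) + λ·(a·log(a/(a−z)) − z) on 𝔻, where log denotes the branch of the logarithm with log(1) = 0 (well-defined since a/(a−z) lies in the right half-plane for z ∈ 𝔻). Then φ'(z) = (a + λz)/(a − z) and Re(1 + z·φ''(z)/φ'(z)) > 0 for all z ∈ 𝔻; in particular φ is a convex univalent function on 𝔻. -/
/-!
With `u = z/a` and `s = |u|`, `φ' = (1 + λu)/(1 - u)` and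
`1 + zφ''/φ' = 1 - (1 + λu)⁻¹ + (1 - u)⁻¹`. Now `Re((1 + λu)(1 - ū)) ≥ 1 - 2s - s²`, and
`Re (1 + v)⁻¹ ∈ [1/(1 + s), 1/(1 - s)]` for `|v| ≤ s`, so that
`Re(1 + zφ''/φ') ≥ 1 - 1/(1 - s) + 1/(1 + s) = (1 - 2s - s²)/(1 - s²)`. Both are positive as soon
as `s < √2 - 1`, which `|z| < 1 ≤ (√2 - 1) a` guarantees.

`Re φ' > 0` makes `φ` univalent (Noshiro–Warschawski: the mean value theorem along a segment).
For convexity fix `0 < r < 1`. Along `z = r e^{iθ}` the argument of the outward normal `z φ'(z)`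
has derivative `Re(1 + zφ''/φ') > 0`, so it turns monotonically through exactly `2π`; hence
`φ(|z| = r)` lies on the inner side of each of its tangent lines. The maximum principle for
`Re` extends this to `φ(|z| ≤ r)`, and the open mapping theorem plus a connectedness argument show
that `φ(|z| ≤ r)` is the intersection of these half-planes, hence convex.
-/

open Metric Complex Set Filter ComplexConjugate
open scoped InnerProductSpace Topology

variable {f F G : ℂ → ℂ} {r : ℝ}

theorem Convex.injOn_of_re_deriv_pos {U : Set ℂ} (hU : Convex ℝ U)
    (hf : ∀ z ∈ U, HasDerivAt f (F z) z) (hF : ∀ z ∈ U, 0 < (F z).re) : InjOn f U := by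
  intro x hx y hy hxy
  by_contra hne
  have hyx : y - x ≠ 0 := sub_ne_zero.2 (Ne.symm hne)
  have hγ : ∀ t ∈ Icc (0 : ℝ) 1, x + t • (y - x) ∈ U := fun t ht => hU.add_smul_sub_mem hx hy ht
  have hg : ∀ t ∈ Icc (0 : ℝ) 1, HasDerivAt (fun t : ℝ => (f (x + t • (y - x)) / (y - x)).re)
      (F (x + t • (y - x))).re t := by
    intro t ht
    have hline : HasDerivAt (fun t : ℝ => x + t • (y - x)) (y - x) t := by
      simpa using ((hasDerivAt_id t).smul_const (y - x)).const_add x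
    have hquot := ((hf _ (hγ t ht)).comp t hline).div_const (y - x)
    simpa [Function.comp_def, mul_div_cancel_right₀ _ hyx] using
      reCLM.hasFDerivAt.comp_hasDerivAt t hquot
  obtain ⟨c, hc, hslope⟩ := exists_hasDerivAt_eq_slope _ _ zero_lt_one
    (fun t ht => (hg t ht).continuousAt.continuousWithinAt)
    (fun t ht => hg t (Ioo_subset_Icc_self ht))
  simp only [zero_smul, add_zero, one_smul, add_sub_cancel, hxy, sub_self, zero_div] at hslope
  exact (hF _ (hγ c (Ioo_subset_Icc_self hc))).ne' hslope

lemma re_le_of_forall_mem_frontier_re_le {E : Type*} [NormedAddCommGroup E] [NormedSpace ℂ E]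
    [Nontrivial E] {g : E → ℂ} {U : Set E} (hU : Bornology.IsBounded U) (hd : DiffContOnCl ℂ g U)
    {C : ℝ} (hC : ∀ z ∈ frontier U, (g z).re ≤ C) {z : E} (hz : z ∈ closure U) :
    (g z).re ≤ C := by
  have hexp : DiffContOnCl ℂ (fun z => exp (g z)) U := ⟨hd.1.cexp, hd.2.cexp⟩
  have := Complex.norm_le_of_forall_mem_frontier_norm_le hU hexp
    (fun z hz => by rw [norm_exp]; exact Real.exp_le_exp.2 (hC z hz)) hz
  rwa [norm_exp, Real.exp_le_exp] at this

lemma inner_lt_of_isOpen {E : Type*} [NormedAddCommGroup E] [InnerProductSpace ℝ E] {s : Set E}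
    (hs : IsOpen s) {N : E} (hN : N ≠ 0) {c : ℝ} (h : ∀ u ∈ s, ⟪N, u⟫_ℝ ≤ c) {u : E}
    (hu : u ∈ s) : ⟪N, u⟫_ℝ < c := by
  have hN' : innerSL ℝ N ≠ 0 := by
    rw [← norm_ne_zero_iff, innerSL_apply_norm]
    exact norm_ne_zero_iff.2 hN
  have hsub : innerSL ℝ N '' s ⊆ interior (Iic c) :=
    interior_maximal (image_subset_iff.2 h) ((innerSL ℝ N).isOpenMap_of_ne_zero hN' s hs)
  rw [interior_Iic] at hsub
  exact hsub ⟨u, hu, rfl⟩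

lemma DifferentiableOn.isOpen_image_of_injOn {U s : Set ℂ} (hd : DifferentiableOn ℂ f U)
    (hU : IsOpen U) (hUc : IsPreconnected U) (hinj : InjOn f U) (hs : s ⊆ U) (hso : IsOpen s) :
    IsOpen (f '' s) := by
  rcases (hd.analyticOnNhd hU).is_constant_or_isOpen hUc with ⟨w, hw⟩ | h
  · have hsub : s.Subsingleton := fun x hx y hy =>
      hinj (hs hx) (hs hy) ((hw x (hs hx)).trans (hw y (hs hy)).symm)
    rcases hsub.eq_empty_or_singleton with rfl | ⟨z, rfl⟩
    · simp
    · exact absurd hso (not_isOpen_singleton z)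
  · exact h s hs hso

lemma le_of_hasDerivAt_eq_neg_mul_sin {A v ρ : ℝ → ℝ} {a b : ℝ} (hA : Monotone A)
    (hAc : Continuous A) (hAb : A b = A a + 2 * Real.pi)
    (hv : ∀ θ, HasDerivAt v (-(ρ θ * Real.sin (A θ - A a))) θ) (hρ : ∀ θ, 0 ≤ ρ θ)
    (hvb : v b = v a) {θ : ℝ} (hθ : θ ∈ Icc a b) : v θ ≤ v a := by
  have hvc : Continuous v := continuous_iff_continuousAt.2 fun x => (hv x).continuousAt
  have hv' : ∀ D : Set ℝ, ∀ x ∈ interior D,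
      HasDerivWithinAt v (-(ρ x * Real.sin (A x - A a))) (interior D) x :=
    fun _ x _ => (hv x).hasDerivWithinAt
  -- `v` decreases while `A` turns through `[A a, A a + π]` and increases afterwards
  obtain ⟨θ₁, hθ₁, hAθ₁⟩ : ∃ θ₁ ∈ Icc a b, A θ₁ = A a + Real.pi :=
    intermediate_value_Icc (hθ.1.trans hθ.2) hAc.continuousOn
      ⟨by linarith [Real.pi_pos], by linarith [Real.pi_pos]⟩
  rcases le_total θ θ₁ with h | h
  · refine antitoneOn_of_hasDerivWithinAt_nonpos (convex_Icc a θ₁) hvc.continuousOn (hv' _)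
      (fun x hx => ?_) (left_mem_Icc.2 hθ₁.1) ⟨hθ.1, h⟩ hθ.1
    rw [interior_Icc] at hx
    have hsin : 0 ≤ Real.sin (A x - A a) := Real.sin_nonneg_of_nonneg_of_le_pi
      (by linarith [hA hx.1.le]) (by linarith [hA hx.2.le])
    nlinarith [hρ x]
  · rw [← hvb]
    refine monotoneOn_of_hasDerivWithinAt_nonneg (convex_Icc θ₁ b) hvc.continuousOn (hv' _)
      (fun x hx => ?_) ⟨h, hθ.2⟩ (right_mem_Icc.2 hθ₁.2) hθ.2
    rw [interior_Icc] at hx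
    have hsin : Real.sin (A x - A a) ≤ 0 := by
      rw [← Real.sin_sub_two_pi]
      exact Real.sin_nonpos_of_nonpos_of_neg_pi_le (by linarith [hA hx.2.le])
        (by linarith [hA hx.1.le])
    nlinarith [hρ x]

lemma inner_mul_exp_mul_I (ρ₁ ρ₂ α β : ℝ) :
    ⟪ρ₁ * exp (α * I), ρ₂ * exp (β * I) * I⟫_ℝ = -(ρ₁ * ρ₂ * Real.sin (β - α)) := by
  simp only [Complex.inner, map_mul, conj_ofReal, mul_re, ofReal_re, exp_ofReal_mul_I_re,
    ofReal_im, exp_ofReal_mul_I_im, zero_mul, sub_zero, I_re, mul_zero, mul_im, add_zero, I_im,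
    mul_one, zero_sub, conj_re, conj_im, mul_neg, neg_zero, neg_mul, sub_neg_eq_add, Real.sin_sub]
  ring

lemma circleMap_zero_mem_ball_one (hr0 : 0 ≤ r) (hr1 : r < 1) (θ : ℝ) :
    circleMap 0 r θ ∈ ball (0 : ℂ) 1 := by
  simpa [abs_of_nonneg hr0] using hr1

lemma circleMap_zero_mul_eq_norm_mul_exp (hr : 0 ≤ r) (θ : ℝ) (x : ℂ) :
    circleMap 0 r θ * x = ‖circleMap 0 r θ * x‖ * exp ((θ + arg x : ℝ) * I) := by
  conv_lhs => rw [circleMap_zero, ← norm_mul_exp_arg_mul_I x]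
  rw [norm_mul, norm_circleMap_zero, abs_of_nonneg hr]
  push_cast
  rw [add_mul, Complex.exp_add]
  ring

-- a continuous determination of `arg (z * F z)` along `z = circleMap 0 r θ`
noncomputable def normalAngle (F : ℂ → ℂ) (r θ : ℝ) : ℝ := θ + arg (F (circleMap 0 r θ))

lemma normalAngle_add_two_pi (θ : ℝ) :
    normalAngle F r (θ + 2 * Real.pi) = normalAngle F r θ + 2 * Real.pi := by
  simp only [normalAngle, periodic_circleMap 0 r θ]
  ring

structure ConvexityCriterion (f F G : ℂ → ℂ) : Prop where
  hasDerivAt : ∀ z ∈ ball (0 : ℂ) 1, HasDerivAt f (F z) z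
  hasDerivAt_deriv : ∀ z ∈ ball (0 : ℂ) 1, HasDerivAt F (G z) z
  re_deriv_pos : ∀ z ∈ ball (0 : ℂ) 1, 0 < (F z).re
  re_one_add_mul_div_pos : ∀ z ∈ ball (0 : ℂ) 1, 0 < (1 + z * G z / F z).re

namespace ConvexityCriterion

lemma deriv_deriv_eq (h : ConvexityCriterion f F G) {z : ℂ} (hz : z ∈ ball (0 : ℂ) 1) :
    deriv (deriv f) z = G z := by
  have hderiv : deriv f =ᶠ[𝓝 z] F :=
    eventually_of_mem (isOpen_ball.mem_nhds hz) fun w hw => (h.hasDerivAt w hw).deriv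
  rw [hderiv.deriv_eq, (h.hasDerivAt_deriv z hz).deriv]

lemma injOn (h : ConvexityCriterion f F G) : InjOn f (ball (0 : ℂ) 1) :=
  (convex_ball 0 1).injOn_of_re_deriv_pos h.hasDerivAt h.re_deriv_pos

lemma differentiableOn (h : ConvexityCriterion f F G) : DifferentiableOn ℂ f (ball (0 : ℂ) 1) :=
  fun z hz => (h.hasDerivAt z hz).differentiableAt.differentiableWithinAt

lemma isOpen_image_ball (h : ConvexityCriterion f F G) (hr1 : r ≤ 1) : IsOpen (f '' ball 0 r) :=
  h.differentiableOn.isOpen_image_of_injOn isOpen_ball (convex_ball 0 1).isPreconnected h.injOn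
    (ball_subset_ball hr1) isOpen_ball

lemma hasDerivAt_normalAngle (h : ConvexityCriterion f F G) (hr0 : 0 ≤ r) (hr1 : r < 1)
    (θ : ℝ) :
    HasDerivAt (normalAngle F r)
      (1 + circleMap 0 r θ * G (circleMap 0 r θ) / F (circleMap 0 r θ)).re θ := by
  set z := circleMap 0 r θ
  have hz := circleMap_zero_mem_ball_one hr0 hr1 θ
  have hlog : HasDerivAt (fun t => log (F (circleMap 0 r t))) (G z * (z * I) / F z) θ :=
    ((h.hasDerivAt_deriv z hz).comp θ (hasDerivAt_circleMap 0 r θ)).clog_real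
      (mem_slitPlane_iff.2 (Or.inl (h.re_deriv_pos z hz)))
  have harg : HasDerivAt (fun t => t + (log (F (circleMap 0 r t))).im)
      (1 + (G z * (z * I) / F z).im) θ :=
    (hasDerivAt_id θ).add (imCLM.hasFDerivAt.comp_hasDerivAt θ hlog)
  convert harg using 1
  · funext t
    simp [normalAngle, log_im]
  rw [show G z * (z * I) / F z = (z * G z / F z) * I by ring]
  simp

lemma strictMono_normalAngle (h : ConvexityCriterion f F G) (hr0 : 0 ≤ r) (hr1 : r < 1) :
    StrictMono (normalAngle F r) :=
  strictMono_of_hasDerivAt_pos (h.hasDerivAt_normalAngle hr0 hr1)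
    fun θ => h.re_one_add_mul_div_pos _ (circleMap_zero_mem_ball_one hr0 hr1 θ)

lemma inner_le_of_mem_sphere (h : ConvexityCriterion f F G) (hr0 : 0 < r) (hr1 : r < 1)
    {ζ w : ℂ} (hζ : ζ ∈ sphere (0 : ℂ) r) (hw : w ∈ sphere (0 : ℂ) r) :
    ⟪ζ * F ζ, f w⟫_ℝ ≤ ⟪ζ * F ζ, f ζ⟫_ℝ := by
  have hsphere : sphere (0 : ℂ) r = range (circleMap 0 r) := by
    rw [range_circleMap, abs_of_pos hr0]
  obtain ⟨c, rfl⟩ : ζ ∈ range (circleMap 0 r) := hsphere ▸ hζ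
  obtain ⟨θ, hθ, rfl⟩ : w ∈ circleMap 0 r '' Ioc c (c + 2 * Real.pi) := by
    rwa [(periodic_circleMap 0 r).image_Ioc Real.two_pi_pos c, ← hsphere]
  set T : ℝ → ℂ := fun θ => circleMap 0 r θ * F (circleMap 0 r θ)
  have hpolar : ∀ θ, T θ = ‖T θ‖ * exp (normalAngle F r θ * I) :=
    fun θ => circleMap_zero_mul_eq_norm_mul_exp hr0.le θ _
  have hA := h.hasDerivAt_normalAngle hr0.le hr1
  have hv : ∀ θ, HasDerivAt (fun θ => ⟪T c, f (circleMap 0 r θ)⟫_ℝ)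
      (-(‖T c‖ * ‖T θ‖ * Real.sin (normalAngle F r θ - normalAngle F r c))) θ := by
    intro θ
    have hfc := (h.hasDerivAt _ (circleMap_zero_mem_ball_one hr0.le hr1 θ)).comp θ
      (hasDerivAt_circleMap 0 r θ)
    refine ((innerSL ℝ (T c)).hasFDerivAt.comp_hasDerivAt θ hfc).congr_deriv ?_
    rw [innerSL_apply_apply, show F (circleMap 0 r θ) * (circleMap 0 r θ * I) = T θ * I by ring]
    conv_lhs => rw [hpolar c, hpolar θ]
    exact inner_mul_exp_mul_I _ _ _ _
  refine le_of_hasDerivAt_eq_neg_mul_sin (h.strictMono_normalAngle hr0.le hr1).monotone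
    (continuous_iff_continuousAt.2 fun θ => (hA θ).continuousAt) (normalAngle_add_two_pi c) hv
    (fun θ => by positivity) ?_ (Ioc_subset_Icc_self hθ)
  simp only [periodic_circleMap 0 r c]

lemma inner_le_of_mem_closedBall (h : ConvexityCriterion f F G) (hr0 : 0 < r) (hr1 : r < 1)
    {ζ z : ℂ} (hζ : ζ ∈ sphere (0 : ℂ) r) (hz : z ∈ closedBall (0 : ℂ) r) :
    ⟪ζ * F ζ, f z⟫_ℝ ≤ ⟪ζ * F ζ, f ζ⟫_ℝ := by
  have hd : DiffContOnCl ℂ (fun z => f z * conj (ζ * F ζ)) (ball 0 r) := by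
    refine DifferentiableOn.diffContOnCl ?_
    rw [closure_ball 0 hr0.ne']
    exact (h.differentiableOn.mul_const _).mono (closedBall_subset_ball hr1)
  rw [Complex.inner]
  refine re_le_of_forall_mem_frontier_re_le isBounded_ball hd (fun w hw => ?_)
    (by rwa [closure_ball 0 hr0.ne'])
  rw [frontier_ball 0 hr0.ne'] at hw
  simpa only [Complex.inner] using h.inner_le_of_mem_sphere hr0 hr1 hζ hw

lemma inner_lt_of_mem_ball (h : ConvexityCriterion f F G) (hr0 : 0 < r) (hr1 : r < 1)
    {ζ z : ℂ} (hζ : ζ ∈ sphere (0 : ℂ) r) (hz : z ∈ ball (0 : ℂ) r) :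
    ⟪ζ * F ζ, f z⟫_ℝ < ⟪ζ * F ζ, f ζ⟫_ℝ := by
  have hζ1 : ζ ∈ ball (0 : ℂ) 1 := sphere_subset_closedBall.trans (closedBall_subset_ball hr1) hζ
  have hN : ζ * F ζ ≠ 0 := mul_ne_zero (ne_zero_of_mem_sphere hr0.ne' ⟨ζ, hζ⟩)
    fun h0 => (h.re_deriv_pos ζ hζ1).ne' (by simp [h0])
  refine inner_lt_of_isOpen (h.isOpen_image_ball hr1.le) hN ?_ (mem_image_of_mem f hz)
  rintro _ ⟨w, hw, rfl⟩
  exact h.inner_le_of_mem_closedBall hr0 hr1 hζ (ball_subset_closedBall hw)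

lemma biInter_subset_image_closedBall (h : ConvexityCriterion f F G) (hr0 : 0 < r)
    (hr1 : r < 1) :
    ⋂ ζ ∈ sphere (0 : ℂ) r, {u | ⟪ζ * F ζ, u⟫_ℝ ≤ ⟪ζ * F ζ, f ζ⟫_ℝ} ⊆ f '' closedBall 0 r := by
  -- the open half-planes `W` are a connected set meeting `f '' ball 0 r` (at `f 0`) but not its
  -- frontier `f '' sphere 0 r`, so `W ⊆ f '' ball 0 r`; the closed ones lie in the closure of `W`
  set W := ⋂ ζ ∈ sphere (0 : ℂ) r, {u | ⟪ζ * F ζ, u⟫_ℝ < ⟪ζ * F ζ, f ζ⟫_ℝ}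
  have hV : IsClosed (f '' closedBall 0 r) := ((isCompact_closedBall 0 r).image_of_continuousOn
    (h.differentiableOn.continuousOn.mono (closedBall_subset_ball hr1))).isClosed
  have h0 : f 0 ∈ W :=
    mem_iInter₂.2 fun ζ hζ => h.inner_lt_of_mem_ball hr0 hr1 hζ (mem_ball_self hr0)
  have hWU : W ⊆ f '' ball 0 r := by
    refine (convex_iInter₂ fun ζ _ => convex_halfSpace_lt (innerₛₗ ℝ (ζ * F ζ)).isLinear
      _).isPreconnected.subset_left_of_subset_union (h.isOpen_image_ball hr1.le) hV.isOpen_compl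
      (disjoint_compl_right.mono_left (image_mono ball_subset_closedBall)) (fun u hu => ?_)
      ⟨f 0, h0, 0, mem_ball_self hr0, rfl⟩
    by_cases huV : u ∈ f '' closedBall 0 r
    · obtain ⟨z, hz, rfl⟩ := huV
      rcases (mem_closedBall_zero_iff.1 hz).lt_or_eq with hlt | heq
      · exact Or.inl ⟨z, mem_ball_zero_iff.2 hlt, rfl⟩
      · exact (show ⟪z * F z, f z⟫_ℝ < _ from
          mem_iInter₂.1 hu z (mem_sphere_zero_iff_norm.2 heq)).false.elim
    · exact Or.inr huV
  intro u hu
  have hseg : openSegment ℝ (f 0) u ⊆ W := by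
    rintro _ ⟨a, b, ha, hb, hab, rfl⟩
    refine mem_iInter₂.2 fun ζ hζ => ?_
    have h1 := mul_lt_mul_of_pos_left (mem_iInter₂.1 h0 ζ hζ) ha
    have h2 := mul_le_mul_of_nonneg_left (mem_iInter₂.1 hu ζ hζ) hb.le
    have hc : ⟪ζ * F ζ, f ζ⟫_ℝ = a * ⟪ζ * F ζ, f ζ⟫_ℝ + b * ⟪ζ * F ζ, f ζ⟫_ℝ := by
      rw [← add_mul, hab, one_mul]
    simp only [mem_ofPred_eq, inner_add_right, real_inner_smul_right]
    linarith
  exact closure_minimal (hWU.trans (image_mono ball_subset_closedBall)) hV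
    (closure_mono hseg (segment_subset_closure_openSegment (right_mem_segment ℝ _ _)))

lemma image_closedBall_eq_biInter (h : ConvexityCriterion f F G) (hr0 : 0 < r) (hr1 : r < 1) :
    f '' closedBall 0 r = ⋂ ζ ∈ sphere (0 : ℂ) r, {u | ⟪ζ * F ζ, u⟫_ℝ ≤ ⟪ζ * F ζ, f ζ⟫_ℝ} := by
  refine Subset.antisymm ?_ (h.biInter_subset_image_closedBall hr0 hr1)
  rintro _ ⟨z, hz, rfl⟩
  exact mem_iInter₂.2 fun ζ hζ => h.inner_le_of_mem_closedBall hr0 hr1 hζ hz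

lemma convex_image_closedBall (h : ConvexityCriterion f F G) (hr0 : 0 < r) (hr1 : r < 1) :
    Convex ℝ (f '' closedBall 0 r) := by
  rw [h.image_closedBall_eq_biInter hr0 hr1]
  exact convex_iInter₂ fun ζ _ => convex_halfSpace_le (innerₛₗ ℝ (ζ * F ζ)).isLinear _

lemma convex_image_ball (h : ConvexityCriterion f F G) : Convex ℝ (f '' ball 0 1) := by
  refine convex_iff_segment_subset.2 ?_
  rintro _ ⟨z₁, hz₁, rfl⟩ _ ⟨z₂, hz₂, rfl⟩
  obtain ⟨r, hr, hr1⟩ :=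
    exists_between (max_lt (mem_ball_zero_iff.1 hz₁) (mem_ball_zero_iff.1 hz₂))
  have hr0 : 0 < r := (norm_nonneg z₁).trans_lt ((le_max_left _ _).trans_lt hr)
  refine ((h.convex_image_closedBall hr0 hr1).segment_subset (mem_image_of_mem f ?_)
    (mem_image_of_mem f ?_)).trans (image_mono (closedBall_subset_ball hr1))
  · exact mem_closedBall_zero_iff.2 ((le_max_left _ _).trans hr.le)
  · exact mem_closedBall_zero_iff.2 ((le_max_right _ _).trans hr.le)

end ConvexityCriterion

lemma sqrt_two_sub_one_sq_add : (√2 - 1) ^ 2 + 2 * (√2 - 1) = 1 := by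
  nlinarith [Real.sq_sqrt (show (0:ℝ) ≤ 2 by norm_num)]

lemma one_sub_two_mul_sub_sq_pos {s : ℝ} (hs0 : 0 ≤ s) (hs : s < √2 - 1) :
    0 < 1 - 2 * s - s ^ 2 := by
  nlinarith [sqrt_two_sub_one_sq_add]

lemma re_inv_one_add_le {u : ℂ} (hu : ‖u‖ < 1) : ((1 + u)⁻¹).re ≤ (1 - ‖u‖)⁻¹ :=
  calc ((1 + u)⁻¹).re ≤ ‖(1 + u)⁻¹‖ := re_le_norm _
    _ = ‖1 + u‖⁻¹ := norm_inv _
    _ ≤ (1 - ‖u‖)⁻¹ := inv_anti₀ (by linarith) (by simpa using norm_sub_norm_le (1 : ℂ) (-u))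

lemma inv_one_add_norm_le_re_inv {v : ℂ} (hv : ‖v‖ < 1) : (1 + ‖v‖)⁻¹ ≤ ((1 + v)⁻¹).re := by
  have hnormSq : normSq (1 + v) = 1 + 2 * v.re + ‖v‖ ^ 2 := by
    rw [Complex.sq_norm, normSq_apply, normSq_apply]
    simp only [add_re, one_re, add_im, one_im, zero_add]
    ring
  have hpos : 0 < normSq (1 + v) := normSq_pos.2 fun h => by
    simp [show v = -1 by linear_combination h] at hv
  rw [inv_re, le_div_iff₀ hpos, hnormSq, inv_mul_le_iff₀ (by positivity)]
  simp only [add_re, one_re]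
  nlinarith [mul_nonneg (sub_nonneg.2 (re_le_norm v)) (sub_nonneg.2 hv.le)]

lemma re_one_sub_inv_add_inv_pos {u v : ℂ} (hu : ‖u‖ < √2 - 1) (hv : ‖v‖ < √2 - 1) :
    0 < (1 - (1 + u)⁻¹ + (1 + v)⁻¹).re := by
  have hκ : √2 - 1 < 1 := by nlinarith [sqrt_two_sub_one_sq_add]
  have h1 := re_inv_one_add_le (hu.trans hκ)
  have h2 := inv_one_add_norm_le_re_inv (hv.trans hκ)
  have h3 : (1 - ‖u‖)⁻¹ < (1 - (√2 - 1))⁻¹ := inv_strictAnti₀ (by linarith) (by linarith)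
  have h4 : (1 + (√2 - 1))⁻¹ < (1 + ‖v‖)⁻¹ :=
    inv_strictAnti₀ (by linarith [norm_nonneg v]) (by linarith)
  -- `√2 - 1` is the root of `1 - (1 - κ)⁻¹ + (1 + κ)⁻¹ = (1 - 2κ - κ²) / (1 - κ²)`
  have h5 : 1 - (1 - (√2 - 1))⁻¹ + (1 + (√2 - 1))⁻¹ = 0 := by
    have : 1 - (√2 - 1) ≠ 0 := by linarith
    have : 1 + (√2 - 1) ≠ 0 := by linarith [norm_nonneg v]
    field_simp
    nlinarith [sqrt_two_sub_one_sq_add]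
  simp only [add_re, sub_re, one_re]
  linarith

lemma re_one_add_mul_div_one_sub_pos {lam w : ℂ} (hlam : ‖lam‖ ≤ 1) (hw : ‖w‖ < √2 - 1) :
    0 < ((1 + lam * w) / (1 - w)).re := by
  have hexpand : (1 + lam * w) * conj (1 - w) = 1 + (lam * w - conj w - lam * w * conj w) := by
    simp only [map_sub, map_one]; ring
  have hbound : ‖lam * w - conj w - lam * w * conj w‖ ≤ 2 * ‖w‖ + ‖w‖ ^ 2 := by
    calc _ ≤ ‖lam * w‖ + ‖conj w‖ + ‖lam * w * conj w‖ :=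
          norm_sub_le_of_le (norm_sub_le _ _) le_rfl
      _ ≤ ‖w‖ + ‖w‖ + ‖w‖ * ‖w‖ := by
        simp only [norm_mul, Complex.norm_conj]
        gcongr <;> nlinarith [norm_nonneg w]
      _ = 2 * ‖w‖ + ‖w‖ ^ 2 := by ring
  have hre : 0 < ((1 + lam * w) * conj (1 - w)).re := by
    rw [hexpand, add_re, one_re]
    nlinarith [neg_le_of_abs_le (abs_re_le_norm (lam * w - conj w - lam * w * conj w)),
      one_sub_two_mul_sub_sq_pos (norm_nonneg w) hw]
  rw [div_eq_mul_inv, inv_def, ← mul_assoc, re_mul_ofReal]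
  exact mul_pos hre (inv_pos.2 (normSq_pos.2 fun h => by
    simp [show w = 1 by linear_combination -h] at hw; nlinarith [sqrt_two_sub_one_sq_add]))

noncomputable def shiftedLog (a : ℝ) (lam z : ℂ) : ℂ :=
  a * log (a / (a - z)) + lam * (a * log (a / (a - z)) - z)

section ShiftedLog

variable {a : ℝ} {z : ℂ}

lemma ofReal_sub_ne_zero_of_norm_lt (hz : ‖z‖ < a) : (a : ℂ) - z ≠ 0 := fun h => by
  simp [← sub_eq_zero.1 h, abs_of_nonneg ((norm_nonneg z).trans hz.le)] at hz

lemma hasDerivAt_log_div_sub (hz : ‖z‖ < a) :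
    HasDerivAt (fun z : ℂ => log (a / (a - z))) (a - z)⁻¹ z := by
  have ha : (a : ℂ) ≠ 0 := ofReal_ne_zero.2 ((norm_nonneg z).trans_lt hz).ne'
  have hsub := ofReal_sub_ne_zero_of_norm_lt hz
  have hdiv : HasDerivAt (fun w : ℂ => (a : ℂ) / (a - w)) (a / (a - z) ^ 2) z := by
    refine ((hasDerivAt_const z (a : ℂ)).div ((hasDerivAt_id z).const_sub (a : ℂ))
      hsub).congr_deriv ?_
    simp
  have hslit : (a : ℂ) / (a - z) ∈ slitPlane := by
    refine mem_slitPlane_iff.2 (Or.inl ?_)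
    rw [div_re, ofReal_re, ofReal_im, zero_mul, zero_div, add_zero, sub_re, ofReal_re]
    exact div_pos (mul_pos (by linarith [norm_nonneg z]) (by linarith [re_le_norm z]))
      (normSq_pos.2 hsub)
  refine (hdiv.clog hslit).congr_deriv ?_
  field_simp

lemma hasDerivAt_shiftedLog (lam : ℂ) (hz : ‖z‖ < a) :
    HasDerivAt (shiftedLog a lam) ((a + lam * z) / (a - z)) z := by
  have hsub := ofReal_sub_ne_zero_of_norm_lt hz
  have hlog := (hasDerivAt_log_div_sub hz).const_mul (a : ℂ)
  refine (hlog.add ((hlog.sub (hasDerivAt_id z)).const_mul lam)).congr_deriv ?_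
  field_simp
  ring

lemma hasDerivAt_div_sub (lam : ℂ) (hz : (a : ℂ) - z ≠ 0) :
    HasDerivAt (fun z : ℂ => (a + lam * z) / (a - z)) (a * (1 + lam) / (a - z) ^ 2) z := by
  refine ((((hasDerivAt_id z).const_mul lam).const_add (a : ℂ)).div
    ((hasDerivAt_id z).const_sub (a : ℂ)) hz).congr_deriv ?_
  simp only [id, mul_one]
  ring

lemma norm_div_lt_sqrt_two_sub_one (ha : 1 + √2 ≤ a) (hz : ‖z‖ < 1) : ‖z / a‖ < √2 - 1 := by
  have ha0 : 0 < a := by linarith [Real.sqrt_nonneg 2]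
  rw [norm_div, norm_real, Real.norm_of_nonneg ha0.le, div_lt_iff₀ ha0]
  nlinarith [Real.sq_sqrt (show (0:ℝ) ≤ 2 by norm_num), Real.sqrt_nonneg 2]

lemma re_div_sub_pos {lam : ℂ} (ha : 1 + √2 ≤ a) (hlam : ‖lam‖ ≤ 1) (hz : ‖z‖ < 1) :
    0 < ((a + lam * z) / (a - z)).re := by
  have ha0 : (a : ℂ) ≠ 0 := ofReal_ne_zero.2 (by linarith [Real.sqrt_nonneg 2])
  convert re_one_add_mul_div_one_sub_pos hlam (norm_div_lt_sqrt_two_sub_one ha hz) using 2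
  field_simp

lemma re_one_add_mul_div_div_sub_pos {lam : ℂ} (ha : 1 + √2 ≤ a) (hlam : ‖lam‖ ≤ 1)
    (hz : ‖z‖ < 1) :
    0 < (1 + z * (a * (1 + lam) / (a - z) ^ 2) / ((a + lam * z) / (a - z))).re := by
  have ha0 : (a : ℂ) ≠ 0 := ofReal_ne_zero.2 (by linarith [Real.sqrt_nonneg 2])
  have hsub := ofReal_sub_ne_zero_of_norm_lt (by linarith [Real.sqrt_nonneg 2] : ‖z‖ < a)
  have hw := norm_div_lt_sqrt_two_sub_one ha hz
  have hu : ‖lam * (z / a)‖ < √2 - 1 :=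
    (norm_mul_le_of_le hlam le_rfl).trans_lt (by simpa using hw)
  have hadd : (a : ℂ) + z * lam ≠ 0 := fun h0 => (re_div_sub_pos ha hlam hz).ne' (by
    simp [mul_comm lam, h0])
  convert re_one_sub_inv_add_inv_pos hu (by rwa [norm_neg] : ‖-(z / a)‖ < √2 - 1) using 2
  rw [← sub_eq_add_neg, one_sub_div ha0, ← mul_div_assoc lam z (a : ℂ), one_add_div ha0, inv_div,
    inv_div]
  field_simp
  ring

lemma shiftedLog_convexityCriterion {lam : ℂ} (ha : 1 + √2 ≤ a) (hlam : ‖lam‖ ≤ 1) :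
    ConvexityCriterion (shiftedLog a lam) (fun z => (a + lam * z) / (a - z))
      (fun z => a * (1 + lam) / (a - z) ^ 2) := by
  have hlt : ∀ z ∈ ball (0 : ℂ) 1, ‖z‖ < a := fun z hz => by
    linarith [mem_ball_zero_iff.1 hz, Real.sqrt_nonneg 2]
  exact ⟨fun z hz => hasDerivAt_shiftedLog lam (hlt z hz),
    fun z hz => hasDerivAt_div_sub lam (ofReal_sub_ne_zero_of_norm_lt (hlt z hz)),
    fun z hz => re_div_sub_pos ha hlam (mem_ball_zero_iff.1 hz),
    fun z hz => re_one_add_mul_div_div_sub_pos ha hlam (mem_ball_zero_iff.1 hz)⟩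

end ShiftedLog

/-- For real `a ≥ 1 + √2` and `|λ| = 1`, the function
`φ(z) = a log(a/(a-z)) + λ (a log(a/(a-z)) - z)` satisfies `φ'(z) = (a+λz)/(a-z)` and
`Re(1 + zφ''(z)/φ'(z)) > 0` on `𝔻`; in particular `φ` is convex univalent on `𝔻`. -/
theorem shifted_log_convex_univalent
    (a : ℝ) (ha : 1 + Real.sqrt 2 ≤ a) (lam : ℂ) (hlam : ‖lam‖ = 1)
    (φ : ℂ → ℂ)
    (hφ : ∀ z : ℂ, φ z = (a : ℂ) * Complex.log ((a : ℂ) / ((a : ℂ) - z))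
        + lam * ((a : ℂ) * Complex.log ((a : ℂ) / ((a : ℂ) - z)) - z)) :
    (∀ z ∈ ball (0:ℂ) 1, deriv φ z = ((a : ℂ) + lam * z) / ((a : ℂ) - z)) ∧
    (∀ z ∈ ball (0:ℂ) 1, 0 < (1 + z * deriv (deriv φ) z / deriv φ z).re) ∧
    Set.InjOn φ (ball (0:ℂ) 1) ∧
    Convex ℝ (φ '' ball (0:ℂ) 1) := by
  obtain rfl : φ = shiftedLog a lam := funext hφ
  have h := shiftedLog_convexityCriterion ha hlam.le
  refine ⟨fun z hz => (h.hasDerivAt z hz).deriv, fun z hz => ?_, h.injOn, h.convex_image_ball⟩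
  rw [h.deriv_deriv_eq hz, (h.hasDerivAt z hz).deriv]
  exact h.re_one_add_mul_div_pos z hz
end
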